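/- arXiv:1703.02877 — 2 statements merged into one kernel-verified Lean document; each statement's English description precedes it below -/
import Mathlib

section
/- Let C be an additive (preadditive with finite biproducts) category, let M and M_1, …, M_n be objects of C such that Hom_C(M_i, M_j) = 0 whenever i ≠ j, and suppose there exists some isomorphism φ : M ≅ ⊕_{i=1}^n M_i. Then for any morphism φ' : M ⟶ ⊕_{i=1}^n M_i, the morphism φ' is an isomorphism if and only if for every i the component φ'_i := π_i ∘ φ' (where π_i is the i-th biproduct projection) is a free generator of Hom_C(M, M_i) as a left End_C(M_i)-module, i.e. the map End_C(M_i) → Hom_C(M, M_i) sending e to e ∘ φ'_i is a bijection. -/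
open CategoryTheory CategoryTheory.Limits

section Aux

variable {C : Type*} [Category C] [Preadditive C] [HasFiniteBiproducts C]
  {n : ℕ} {Mi : Fin n → C}

private lemma keylem (hhom : ∀ i j : Fin n, i ≠ j → ∀ f : Mi i ⟶ Mi j, f = 0)
    (i : Fin n) (f : ⨁ Mi ⟶ Mi i) :
    biproduct.π Mi i ≫ biproduct.ι Mi i ≫ f = f := by
  symm
  calc f = (∑ j : Fin n, biproduct.π Mi j ≫ biproduct.ι Mi j) ≫ f := by
        rw [biproduct.total, Category.id_comp]
    _ = ∑ j : Fin n, biproduct.π Mi j ≫ biproduct.ι Mi j ≫ f := by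
        rw [Preadditive.sum_comp]; simp only [Category.assoc]
    _ = biproduct.π Mi i ≫ biproduct.ι Mi i ≫ f :=
        Finset.sum_eq_single i
          (fun j _ hji => by rw [hhom j i hji (biproduct.ι Mi j ≫ f)]; simp)
          (fun h => absurd (Finset.mem_univ i) h)

omit [Preadditive C] [HasFiniteBiproducts C] in
private lemma bij_iff_isIso {X : C} (a : X ⟶ X) :
    Function.Bijective (fun e : X ⟶ X => a ≫ e) ↔ IsIso a := by
  constructor
  · rintro ⟨hinj, hsurj⟩
    obtain ⟨b, hb⟩ := hsurj (𝟙 X)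
    refine ⟨b, hb, ?_⟩
    apply hinj
    simp only [← Category.assoc, hb]
    simp
  · intro h
    constructor
    · intro e₁ e₂ he
      simpa using congrArg (fun g => inv a ≫ g) he
    · intro g
      exact ⟨inv a ≫ g, by simp⟩

end Aux

/-- Lemma `isomorphism`: in an additive category, given objects `M` and `M₁, …, Mₙ` with
`Hom(Mᵢ, Mⱼ) = 0` for `i ≠ j` and an isomorphism `M ≅ ⨁ Mᵢ`, a morphism
`φ' : M ⟶ ⨁ Mᵢ` is an isomorphism iff each component `φ'ᵢ = πᵢ ∘ φ'` is a free generator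
of `Hom(M, Mᵢ)` as a left `End(Mᵢ)`-module. -/
theorem stmt0 {C : Type*} [Category C] [Preadditive C] [HasFiniteBiproducts C]
    {n : ℕ} (M : C) (Mi : Fin n → C)
    (hhom : ∀ i j : Fin n, i ≠ j → ∀ f : Mi i ⟶ Mi j, f = 0)
    (φ : M ≅ ⨁ Mi) (φ' : M ⟶ ⨁ Mi) :
    IsIso φ' ↔ ∀ i : Fin n,
      Function.Bijective (fun e : Mi i ⟶ Mi i => (φ' ≫ biproduct.π Mi i) ≫ e) := by
  set a : ∀ i, Mi i ⟶ Mi i :=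
    fun i => biproduct.ι Mi i ≫ φ.inv ≫ φ' ≫ biproduct.π Mi i with ha
  -- `φ.inv ≫ φ'` is the diagonal matrix with entries `a i`
  have hmap : φ.inv ≫ φ' = biproduct.map a := by
    apply biproduct.hom_ext'
    intro j
    apply biproduct.hom_ext
    intro i
    simp only [Category.assoc, biproduct.ι_map_assoc]
    by_cases hji : j = i
    · subst hji; simp [ha]
    · rw [hhom j i hji (biproduct.ι Mi j ≫ φ.inv ≫ φ' ≫ biproduct.π Mi i)]
      simp [biproduct.ι_π_ne _ hji]
  -- each bijectivity condition is equivalent to `IsIso (a i)`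
  have hbij : ∀ i, Function.Bijective
      (fun e : Mi i ⟶ Mi i => (φ' ≫ biproduct.π Mi i) ≫ e) ↔ IsIso (a i) := by
    intro i
    rw [← bij_iff_isIso (a i)]
    -- the map `f ↦ ι i ≫ φ.inv ≫ f` from `Hom(M, Mi i)` to `End (Mi i)` is a bijection
    have hΨ : Function.Bijective
        (fun f : M ⟶ Mi i => biproduct.ι Mi i ≫ φ.inv ≫ f) := by
      refine Function.bijective_iff_has_inverse.mpr
        ⟨fun e => φ.hom ≫ biproduct.π Mi i ≫ e, ?_, ?_⟩
      · intro f
        simp only [Category.assoc]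
        rw [keylem hhom i (φ.inv ≫ f)]
        simp
      · intro e
        simp only [Category.assoc]
        simp
    have hcomp : (fun e : Mi i ⟶ Mi i => a i ≫ e) =
        (fun f : M ⟶ Mi i => biproduct.ι Mi i ≫ φ.inv ≫ f) ∘
        (fun e : Mi i ⟶ Mi i => (φ' ≫ biproduct.π Mi i) ≫ e) := by
      funext e
      simp [ha, Category.assoc]
    constructor
    · intro h
      rw [hcomp]
      exact hΨ.comp h
    · intro h
      have := hcomp ▸ h
      exact (Function.Bijective.of_comp_iff' hΨ _).mp this
  rw [forall_congr' hbij]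
  -- now: IsIso φ' ↔ ∀ i, IsIso (a i)
  constructor
  · intro h i
    have : IsIso (φ.inv ≫ φ') := inferInstance
    rw [hmap] at this
    refine ⟨biproduct.ι Mi i ≫ inv (biproduct.map a) ≫ biproduct.π Mi i, ?_, ?_⟩
    · rw [← biproduct.ι_map_assoc, IsIso.hom_inv_id_assoc, biproduct.ι_π_self]
    · rw [Category.assoc, Category.assoc, ← biproduct.map_π a i,
        IsIso.inv_hom_id_assoc, biproduct.ι_π_self]
  · intro h
    have : IsIso (biproduct.map a) := by
      have := fun i => h i
      exact (inferInstanceAs (IsIso (biproduct.mapIso (fun i => asIso (a i))).hom))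
    rw [← hmap] at this
    have : IsIso (φ.hom ≫ φ.inv ≫ φ') := inferInstance
    simpa using this
end

section
/- Let R be a commutative ring and M a free R-module of rank 2, and let m : M × M → R be an alternating bilinear form (so m(v, v) = 0 for all v ∈ M). Then m is nondegenerate, i.e. the induced linear map M → Hom_R(M, R) sending x to m(x, −) is bijective, if and only if the induced linear map ⋀²M → R determined by x ∧ y ↦ m(x, y) is bijective. -/
/-!
Both conditions say that `m (b 0) (b 1)` is a unit. The matrix of `x ↦ m x` from `b` to its dual
basis has determinant `m (b 0) (b 1) ^ 2`, since `m` is alternating; and `⋀²M` is free of rank one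
on `b 0 ∧ b 1`, which `g` sends to `m (b 0) (b 1)`.
-/

open Module Set.powersetCard

section Determinant

variable {R M N : Type*} [CommRing R] [AddCommGroup M] [Module R M] [AddCommGroup N] [Module R N]

theorem LinearMap.bijective_iff_isUnit_det_toMatrix {ι : Type*} [Fintype ι] [DecidableEq ι]
    (v : Basis ι R M) (w : Basis ι R N) (f : M →ₗ[R] N) :
    Function.Bijective f ↔ IsUnit (toMatrix v w f).det :=
  ⟨fun hf => (LinearEquiv.ofBijective f hf).isUnit_det v w,
    fun hf => (LinearEquiv.ofIsUnitDet hf).bijective⟩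

theorem LinearMap.bijective_iff_isUnit_apply_basis {ι : Type*} [Unique ι]
    (e : Basis ι R N) (f : N →ₗ[R] R) :
    Function.Bijective f ↔ IsUnit (f (e default)) := by
  classical
  rw [bijective_iff_isUnit_det_toMatrix e (Basis.singleton ι R), Matrix.det_unique,
    toMatrix_apply, Basis.singleton_repr]

theorem LinearMap.IsAlt.det_toMatrix_dualBasis {B : M →ₗ[R] M →ₗ[R] R} (hB : B.IsAlt)
    (b : Basis (Fin 2) R M) :
    (toMatrix b b.dualBasis B).det = B (b 0) (b 1) ^ 2 := by
  simp only [Matrix.det_fin_two, toMatrix_apply, Basis.dualBasis_repr, hB.self_eq_zero,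
    ← hB.neg (b 0) (b 1)]
  ring

end Determinant

instance Set.powersetCard.instUniqueFin (n : ℕ) : Unique (Set.powersetCard (Fin n) n) where
  default := ofCard (Finset.card_fin n)
  uniq _ := eq_iff_subset.2 (Finset.subset_univ _)

theorem Module.Basis.exteriorPower_default {R M : Type*} [CommRing R] [AddCommGroup M]
    [Module R M] {n : ℕ} (b : Basis (Fin n) R M) :
    b.exteriorPower n default = exteriorPower.ιMulti R n b := by
  rw [exteriorPower.basis_apply, exteriorPower.ιMulti_family,
    (ofFinEmbEquiv.symm default).strictMono.eq_id, Function.comp_id]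

/-- For a free module `M` of rank 2 with an alternating bilinear form `m`, the form `m` is
nondegenerate (i.e. `x ↦ m x` is bijective) iff the induced linear map `⋀²M → R`
determined by `x ∧ y ↦ m x y` is bijective. -/
theorem stmt3 {R M : Type*} [CommRing R] [AddCommGroup M] [Module R M]
    (b : Module.Basis (Fin 2) R M)
    (m : M →ₗ[R] M →ₗ[R] R) (hm : ∀ v : M, m v v = 0)
    (g : ⋀[R]^2 M →ₗ[R] R)
    (hg : ∀ x y : M, g ⟨ExteriorAlgebra.ιMulti R 2 ![x, y],
        ExteriorAlgebra.ιMulti_range R 2 (Set.mem_range_self _)⟩ = m x y) :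
    Function.Bijective ⇑m ↔ Function.Bijective ⇑g := by
  have hb : ![b 0, b 1] = ⇑b := by
    ext i
    fin_cases i <;> rfl
  have hgb : g (b.exteriorPower 2 default) = m (b 0) (b 1) := by
    rw [b.exteriorPower_default, ← hb]
    exact hg (b 0) (b 1)
  rw [LinearMap.bijective_iff_isUnit_det_toMatrix b b.dualBasis,
    LinearMap.IsAlt.det_toMatrix_dualBasis hm, isUnit_pow_iff two_ne_zero,
    LinearMap.bijective_iff_isUnit_apply_basis (b.exteriorPower 2), hgb]
end
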